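/- If Q and R are finite convex subposets of a poset P, then the cell transfer sets Q∧R = {s ∈ R : s < Q} ∪ {s ∈ Q : s ∼ R or s < R} and Q∨R = {s ∈ Q : s > R} ∪ {s ∈ R : s ∼ Q or s > Q} are convex subposets of P, and satisfy (Q∧R) ∪ (Q∨R) = Q ∪ R and (Q∧R) ∩ (Q∨R) = Q ∩ R. -/
import Mathlib


variable {P : Type*} [PartialOrder P]

/-- A subset `Q` of a poset is convex if `s ≤ r ≤ t` with `s, t ∈ Q` implies `r ∈ Q`. -/
def IsConvex (Q : Set P) : Prop :=
  ∀ s ∈ Q, ∀ t ∈ Q, ∀ r, s ≤ r → r ≤ t → r ∈ Q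

/-- `s < Q`: `s` is below some element of `Q` (and not above any). -/
def ltSet (s : P) (Q : Set P) : Prop := (∃ t ∈ Q, s < t) ∧ ¬ ∃ t ∈ Q, t < s

/-- `s > Q`: `s` is above some element of `Q` (and not below any). -/
def gtSet (s : P) (Q : Set P) : Prop := (∃ t ∈ Q, t < s) ∧ ¬ ∃ t ∈ Q, s < t

/-- `s ∼ Q`: `s ∈ Q` or `s` is incomparable with every element of `Q`. -/
def simSet (s : P) (Q : Set P) : Prop := s ∈ Q ∨ ∀ t ∈ Q, ¬ s < t ∧ ¬ t < s

/-- The cell transfer operation `Q ∧ R = {s ∈ R : s < Q} ∪ {s ∈ Q : s ∼ R or s < R}`. -/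
def cellWedge (Q R : Set P) : Set P :=
  {s | s ∈ R ∧ ltSet s Q} ∪ {s | s ∈ Q ∧ (simSet s R ∨ ltSet s R)}

/-- The cell transfer operation `Q ∨ R = {s ∈ Q : s > R} ∪ {s ∈ R : s ∼ Q or s > Q}`. -/
def cellVee (Q R : Set P) : Set P :=
  {s | s ∈ Q ∧ gtSet s R} ∪ {s | s ∈ R ∧ (simSet s Q ∨ gtSet s Q)}

/-- Classification of an element relative to a convex set. -/
lemma classify (Q : Set P) (hQ : IsConvex Q) (s : P) :
    s ∈ Q ∨ ltSet s Q ∨ gtSet s Q ∨ ∀ t ∈ Q, ¬ s < t ∧ ¬ t < s := by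
  by_cases h1 : ∃ t ∈ Q, s < t
  · by_cases h2 : ∃ t ∈ Q, t < s
    · obtain ⟨t1, ht1, hst1⟩ := h1
      obtain ⟨t2, ht2, ht2s⟩ := h2
      exact Or.inl (hQ t2 ht2 t1 ht1 s ht2s.le hst1.le)
    · exact Or.inr (Or.inl ⟨h1, h2⟩)
  · by_cases h2 : ∃ t ∈ Q, t < s
    · exact Or.inr (Or.inr (Or.inl ⟨h2, h1⟩))
    · exact Or.inr (Or.inr (Or.inr fun t ht =>
        ⟨fun h => h1 ⟨t, ht, h⟩, fun h => h2 ⟨t, ht, h⟩⟩))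

lemma wedge_convex (Q R : Set P) (hQ : IsConvex Q) (hR : IsConvex R) :
    IsConvex (cellWedge Q R) := by
  intro a ha b hb r har hrb
  rcases ha with ⟨haR, haLQ⟩ | ⟨haQ, haRel⟩ <;>
    rcases hb with ⟨hbR, hbLQ⟩ | ⟨hbQ, hbRel⟩
  · -- a ∈ W1, b ∈ W1
    obtain ⟨q, hqQ, hbq⟩ := hbLQ.1
    exact Or.inl ⟨hR a haR b hbR r har hrb,
      ⟨⟨q, hqQ, lt_of_le_of_lt hrb hbq⟩,
        fun ⟨q', hq', hlt⟩ => hbLQ.2 ⟨q', hq', lt_of_lt_of_le hlt hrb⟩⟩⟩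
  · -- a ∈ W1, b ∈ W2
    have hbR' : b ∈ R := by
      rcases eq_or_lt_of_le (har.trans hrb) with h | h
      · exact h ▸ haR
      · rcases hbRel with hsim | hlt
        · rcases hsim with hbR' | hinc
          · exact hbR'
          · exact absurd h (hinc a haR).2
        · exact absurd ⟨a, haR, h⟩ hlt.2
    have hrR : r ∈ R := hR a haR b hbR' r har hrb
    by_cases h2 : ∃ q' ∈ Q, q' < r
    · obtain ⟨q', hq'Q, hq'r⟩ := h2
      exact Or.inr ⟨hQ q' hq'Q b hbQ r hq'r.le hrb, Or.inl (Or.inl hrR)⟩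
    · rcases eq_or_lt_of_le hrb with h | h
      · exact Or.inr ⟨h ▸ hbQ, Or.inl (Or.inl hrR)⟩
      · exact Or.inl ⟨hrR, ⟨⟨b, hbQ, h⟩, h2⟩⟩
  · -- a ∈ W2, b ∈ W1
    obtain ⟨q, hqQ, hbq⟩ := hbLQ.1
    have hrQ : r ∈ Q := hQ a haQ q hqQ r har (hrb.trans hbq.le)
    by_cases hrR : r ∈ R
    · exact Or.inr ⟨hrQ, Or.inl (Or.inl hrR)⟩
    · rcases eq_or_lt_of_le hrb with h | h
      · exact absurd (h ▸ hbR) hrR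
      · by_cases h2 : ∃ t ∈ R, t < r
        · obtain ⟨t, htR, htr⟩ := h2
          exact absurd (hR t htR b hbR r htr.le hrb) hrR
        · exact Or.inr ⟨hrQ, Or.inr ⟨⟨b, hbR, h⟩, h2⟩⟩
  · -- a ∈ W2, b ∈ W2
    have hrQ : r ∈ Q := hQ a haQ b hbQ r har hrb
    by_cases hrR : r ∈ R
    · exact Or.inr ⟨hrQ, Or.inl (Or.inl hrR)⟩
    · by_cases h1 : ∃ t ∈ R, t < r
      · obtain ⟨t, htR, htr⟩ := h1
        have htb : t < b := lt_of_lt_of_le htr hrb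
        rcases hbRel with hsim | hlt
        · rcases hsim with hbR' | hinc
          · exact absurd (hR t htR b hbR' r htr.le hrb) hrR
          · exact absurd htb (hinc t htR).2
        · exact absurd ⟨t, htR, htb⟩ hlt.2
      · by_cases h2 : ∃ t ∈ R, r < t
        · exact Or.inr ⟨hrQ, Or.inr ⟨h2, h1⟩⟩
        · exact Or.inr ⟨hrQ, Or.inl (Or.inr fun t ht =>
            ⟨fun h => h2 ⟨t, ht, h⟩, fun h => h1 ⟨t, ht, h⟩⟩)⟩

lemma vee_convex (Q R : Set P) (hQ : IsConvex Q) (hR : IsConvex R) :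
    IsConvex (cellVee Q R) := by
  intro a ha b hb r har hrb
  rcases ha with ⟨haQ, haGR⟩ | ⟨haR, haRel⟩ <;>
    rcases hb with ⟨hbQ, hbGR⟩ | ⟨hbR, hbRel⟩
  · -- a ∈ V1, b ∈ V1
    obtain ⟨q, hqR, hqa⟩ := haGR.1
    exact Or.inl ⟨hQ a haQ b hbQ r har hrb,
      ⟨⟨q, hqR, lt_of_lt_of_le hqa har⟩,
        fun ⟨q', hq', hlt⟩ => haGR.2 ⟨q', hq', lt_of_le_of_lt har hlt⟩⟩⟩
  · -- a ∈ V1, b ∈ V2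
    obtain ⟨q, hqR, hqa⟩ := haGR.1
    have hrR : r ∈ R := hR q hqR b hbR r (hqa.le.trans har) hrb
    by_cases hrQ : r ∈ Q
    · exact Or.inr ⟨hrR, Or.inl (Or.inl hrQ)⟩
    · rcases eq_or_lt_of_le har with h | h
      · exact absurd (h ▸ haQ) hrQ
      · by_cases h2 : ∃ t ∈ Q, r < t
        · obtain ⟨t, htQ, hrt⟩ := h2
          exact absurd (hQ a haQ t htQ r har hrt.le) hrQ
        · exact Or.inr ⟨hrR, Or.inr ⟨⟨a, haQ, h⟩, h2⟩⟩
  · -- a ∈ V2, b ∈ V1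
    have haQ' : a ∈ Q := by
      rcases eq_or_lt_of_le (har.trans hrb) with h | h
      · exact h ▸ hbQ
      · rcases haRel with hsim | hgt
        · rcases hsim with haQ' | hinc
          · exact haQ'
          · exact absurd h (hinc b hbQ).1
        · exact absurd ⟨b, hbQ, h⟩ hgt.2
    have hrQ : r ∈ Q := hQ a haQ' b hbQ r har hrb
    by_cases h2 : ∃ q' ∈ R, r < q'
    · obtain ⟨q', hq'R, hrq'⟩ := h2
      exact Or.inr ⟨hR a haR q' hq'R r har hrq'.le, Or.inl (Or.inl hrQ)⟩
    · rcases eq_or_lt_of_le har with h | h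
      · exact Or.inr ⟨h ▸ haR, Or.inl (Or.inl hrQ)⟩
      · exact Or.inl ⟨hrQ, ⟨⟨a, haR, h⟩, h2⟩⟩
  · -- a ∈ V2, b ∈ V2
    have hrR : r ∈ R := hR a haR b hbR r har hrb
    by_cases hrQ : r ∈ Q
    · exact Or.inr ⟨hrR, Or.inl (Or.inl hrQ)⟩
    · by_cases h1 : ∃ t ∈ Q, r < t
      · obtain ⟨t, htQ, hrt⟩ := h1
        have hat : a < t := lt_of_le_of_lt har hrt
        rcases haRel with hsim | hgt
        · rcases hsim with haQ | hinc
          · exact absurd (hQ a haQ t htQ r har hrt.le) hrQ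
          · exact absurd hat (hinc t htQ).1
        · exact absurd ⟨t, htQ, hat⟩ hgt.2
      · by_cases h2 : ∃ t ∈ Q, t < r
        · exact Or.inr ⟨hrR, Or.inr ⟨h2, h1⟩⟩
        · exact Or.inr ⟨hrR, Or.inl (Or.inr fun t ht =>
            ⟨fun h => h1 ⟨t, ht, h⟩, fun h => h2 ⟨t, ht, h⟩⟩)⟩

/-- For finite convex subposets `Q`, `R` of a poset `P`, the cell transfer sets `Q ∧ R`
and `Q ∨ R` are convex, with `(Q∧R) ∪ (Q∨R) = Q ∪ R` and `(Q∧R) ∩ (Q∨R) = Q ∩ R`. -/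
theorem stmt18 (Q R : Set P) (hQf : Q.Finite) (hRf : R.Finite)
    (hQ : IsConvex Q) (hR : IsConvex R) :
    IsConvex (cellWedge Q R) ∧ IsConvex (cellVee Q R) ∧
      cellWedge Q R ∪ cellVee Q R = Q ∪ R ∧
      cellWedge Q R ∩ cellVee Q R = Q ∩ R := by
  refine ⟨wedge_convex Q R hQ hR, vee_convex Q R hQ hR, ?_, ?_⟩
  · ext s
    constructor
    · rintro ((⟨h, -⟩ | ⟨h, -⟩) | (⟨h, -⟩ | ⟨h, -⟩))
      · exact Or.inr h
      · exact Or.inl h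
      · exact Or.inl h
      · exact Or.inr h
    · rintro (hsQ | hsR)
      · rcases classify R hR s with hsR | hlt | hgt | hinc
        · exact Or.inl (Or.inr ⟨hsQ, Or.inl (Or.inl hsR)⟩)
        · exact Or.inl (Or.inr ⟨hsQ, Or.inr hlt⟩)
        · exact Or.inr (Or.inl ⟨hsQ, hgt⟩)
        · exact Or.inl (Or.inr ⟨hsQ, Or.inl (Or.inr hinc)⟩)
      · rcases classify Q hQ s with hsQ | hlt | hgt | hinc
        · exact Or.inl (Or.inr ⟨hsQ, Or.inl (Or.inl hsR)⟩)
        · exact Or.inl (Or.inl ⟨hsR, hlt⟩)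
        · exact Or.inr (Or.inr ⟨hsR, Or.inr hgt⟩)
        · exact Or.inr (Or.inr ⟨hsR, Or.inl (Or.inr hinc)⟩)
  · ext s
    constructor
    · rintro ⟨hw, hv⟩
      rcases hw with ⟨hsR, hlQ⟩ | ⟨hsQ, hrel⟩
      · -- s ∈ R, ltSet s Q
        rcases hv with ⟨hsQ, -⟩ | ⟨-, hsim | hgt⟩
        · exact ⟨hsQ, hsR⟩
        · rcases hsim with hsQ | hinc
          · exact ⟨hsQ, hsR⟩
          · obtain ⟨t, htQ, hst⟩ := hlQ.1
            exact absurd hst (hinc t htQ).1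
        · exact absurd hlQ.1 hgt.2
      · rcases hv with ⟨-, hgR⟩ | ⟨hsR, -⟩
        · rcases hrel with hsim | hlt
          · rcases hsim with hsR | hinc
            · exact ⟨hsQ, hsR⟩
            · obtain ⟨t, htR, hts⟩ := hgR.1
              exact absurd hts (hinc t htR).2
          · exact absurd hlt.1 hgR.2
        · exact ⟨hsQ, hsR⟩
    · rintro ⟨hsQ, hsR⟩
      exact ⟨Or.inr ⟨hsQ, Or.inl (Or.inl hsR)⟩, Or.inr ⟨hsR, Or.inl (Or.inl hsQ)⟩⟩
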